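/- arXiv:1808.01366 — 3 statements merged into one kernel-verified Lean document; each statement's English description precedes it below -/
import Mathlib

section
/- Let ρ > 1 and W be the weighted Wiener algebra with weight ρ^{|i|}. For μ ∈ ℂ with ρ^{-1} < |μ| < ρ, the operator L_μ(f)(λ) = (f(λ) − f(μ))/(λ − μ) is a bounded operator on W with norm at most max{1/(ρ − |μ|), 1/(|μ| − ρ^{-1})}. -/
/-!
Split `f λ = ∑ c i λ^i` as `F λ + G λ⁻¹ - c 0` with the power series `F w = ∑ c N w^N` and
`G w = ∑ c (-N) w^N`. For a power series, the coefficients of `(F w - F z) / (w - z)` are tails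
`∑ₖ b (n + k + 1) z^k`; exchanging the order of summation and using
`∑_{n + k = N} |z|^k R^n ≤ R^N / (1 - |z| / R)` bounds their weighted norm (weight `R^n`) by
`(R - |z|)⁻¹` times that of `F`. The nonpositive part is the same estimate for `G` at `μ⁻¹`, since
`(G λ⁻¹ - G μ⁻¹) / (λ - μ) = -(μ λ)⁻¹ (G λ⁻¹ - G μ⁻¹) / (λ⁻¹ - μ⁻¹)` and
`ρ |μ|⁻¹ (ρ - |μ|⁻¹)⁻¹ = (|μ| - ρ⁻¹)⁻¹`.
-/

section GeometricTail

variable {a : ℕ → ℝ} {r : ℝ}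

theorem tsum_nat_add_le (ha0 : 0 ≤ a) (ha : Summable a) (k : ℕ) :
    ∑' n, a (n + k) ≤ ∑' n, a n :=
  ((summable_nat_add_iff k).2 ha).tsum_le_tsum_of_inj _ (add_left_injective k)
    (fun n _ => ha0 n) (fun _ => le_rfl) ha

theorem summable_prod_shift_mul_geometric (ha0 : 0 ≤ a) (ha : Summable a) (hr0 : 0 ≤ r)
    (hr1 : r < 1) : Summable fun p : ℕ × ℕ => a (p.1 + p.2) * r ^ p.2 := by
  have hswap : Summable fun q : ℕ × ℕ => a (q.2 + q.1) * r ^ q.1 := by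
    rw [summable_prod_of_nonneg fun q => mul_nonneg (ha0 _) (pow_nonneg hr0 _)]
    refine ⟨fun k => ((summable_nat_add_iff k).2 ha).mul_right (r ^ k), ?_⟩
    refine .of_nonneg_of_le (fun k => tsum_nonneg fun n => mul_nonneg (ha0 _) (pow_nonneg hr0 _))
      (fun k => ?_) ((summable_geometric_of_lt_one hr0 hr1).mul_left (∑' n, a n))
    dsimp only
    rw [tsum_mul_right]
    exact mul_le_mul_of_nonneg_right (tsum_nat_add_le ha0 ha k) (pow_nonneg hr0 _)
  exact hswap.prod_symm

theorem tsum_tsum_shift_mul_geometric_le (ha0 : 0 ≤ a) (ha : Summable a) (hr0 : 0 ≤ r)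
    (hr1 : r < 1) : ∑' n, ∑' k, a (n + k) * r ^ k ≤ (∑' n, a n) * (1 - r)⁻¹ := by
  have h := summable_prod_shift_mul_geometric ha0 ha hr0 hr1
  calc ∑' n, ∑' k, a (n + k) * r ^ k = ∑' k, (∑' n, a (n + k)) * r ^ k := by
        rw [← Summable.tsum_comm (f := fun n k => a (n + k) * r ^ k) h]
        exact tsum_congr fun k => tsum_mul_right
    _ ≤ ∑' k, (∑' n, a n) * r ^ k := by
        refine Summable.tsum_le_tsum (fun k => ?_) ?_ ?_
        · exact mul_le_mul_of_nonneg_right (tsum_nat_add_le ha0 ha k) (pow_nonneg hr0 _)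
        · simpa only [Prod.swap, tsum_mul_right] using h.prod_symm.prod
        · exact (summable_geometric_of_lt_one hr0 hr1).mul_left _
    _ = (∑' n, a n) * (1 - r)⁻¹ := by rw [tsum_mul_left, tsum_geometric_of_lt_one hr0 hr1]

end GeometricTail

section SlopeCoeff

variable {𝕜 : Type*} [NormedField 𝕜] {b : ℕ → 𝕜} {z w : 𝕜} {R : ℝ}

/-- The `n`-th coefficient of `(F w - F z) / (w - z)`, as a power series in `w`,
where `F w = ∑ N, b N * w ^ N`. -/
noncomputable def slopeCoeff (b : ℕ → 𝕜) (z : 𝕜) (n : ℕ) : 𝕜 := ∑' k, b (n + k + 1) * z ^ k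

theorem norm_slopeCoeff_term_mul_pow (hR : R ≠ 0) (n k : ℕ) :
    ‖b (n + k + 1) * z ^ k‖ * R ^ (n + 1) =
      ‖b (n + k + 1)‖ * R ^ (n + k + 1) * (‖z‖ / R) ^ k := by
  rw [norm_mul, norm_pow, div_pow, add_right_comm n k 1, pow_add R (n + 1) k]
  field_simp

theorem summable_slopeCoeff_majorant (hz : ‖z‖ < R) (hb : Summable fun N => ‖b N‖ * R ^ N) :
    Summable fun p : ℕ × ℕ => ‖b (p.1 + p.2 + 1)‖ * R ^ (p.1 + p.2 + 1) * (‖z‖ / R) ^ p.2 := by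
  have hR : 0 < R := (norm_nonneg z).trans_lt hz
  exact summable_prod_shift_mul_geometric (a := fun N => ‖b (N + 1)‖ * R ^ (N + 1))
    (fun N => by positivity) ((summable_nat_add_iff 1).2 hb) (by positivity)
    ((div_lt_one hR).2 hz)

theorem summable_norm_slopeCoeff_term (hz : ‖z‖ < R) (hb : Summable fun N => ‖b N‖ * R ^ N)
    (n : ℕ) : Summable fun k => ‖b (n + k + 1) * z ^ k‖ := by
  have hR : 0 < R := (norm_nonneg z).trans_lt hz
  refine (summable_mul_right_iff (pow_ne_zero (n + 1) hR.ne')).1 ?_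
  simpa only [norm_slopeCoeff_term_mul_pow hR.ne'] using
    (summable_slopeCoeff_majorant hz hb).prod_factor n

theorem norm_slopeCoeff_mul_pow_le (hz : ‖z‖ < R) (hb : Summable fun N => ‖b N‖ * R ^ N)
    (n : ℕ) : ‖slopeCoeff b z n‖ * R ^ (n + 1) ≤
      ∑' k, ‖b (n + k + 1)‖ * R ^ (n + k + 1) * (‖z‖ / R) ^ k := by
  have hR : 0 < R := (norm_nonneg z).trans_lt hz
  calc ‖slopeCoeff b z n‖ * R ^ (n + 1)
      ≤ (∑' k, ‖b (n + k + 1) * z ^ k‖) * R ^ (n + 1) := by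
        gcongr
        exact norm_tsum_le_tsum_norm (summable_norm_slopeCoeff_term hz hb n)
    _ = _ := by
        rw [← tsum_mul_right]
        exact tsum_congr fun k => norm_slopeCoeff_term_mul_pow hR.ne' n k

theorem summable_norm_slopeCoeff_mul_pow (hz : ‖z‖ < R) (hb : Summable fun N => ‖b N‖ * R ^ N) :
    Summable fun n => ‖slopeCoeff b z n‖ * R ^ n := by
  have hR : 0 < R := (norm_nonneg z).trans_lt hz
  refine (summable_mul_right_iff hR.ne').1 ?_
  simp only [mul_assoc, ← pow_succ]
  exact .of_nonneg_of_le (fun n => by positivity) (norm_slopeCoeff_mul_pow_le hz hb)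
    (summable_slopeCoeff_majorant hz hb).prod

theorem tsum_norm_slopeCoeff_mul_pow_le (hz : ‖z‖ < R) (hb : Summable fun N => ‖b N‖ * R ^ N) :
    ∑' n, ‖slopeCoeff b z n‖ * R ^ n ≤ (R - ‖z‖)⁻¹ * ∑' N, ‖b (N + 1)‖ * R ^ (N + 1) := by
  have hR : 0 < R := (norm_nonneg z).trans_lt hz
  have hb1 : Summable fun N => ‖b (N + 1)‖ * R ^ (N + 1) := (summable_nat_add_iff 1).2 hb
  have hr0 : 0 ≤ ‖z‖ / R := by positivity
  have hr1 : ‖z‖ / R < 1 := (div_lt_one hR).2 hz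
  refine le_of_mul_le_mul_right ?_ hR
  calc (∑' n, ‖slopeCoeff b z n‖ * R ^ n) * R = ∑' n, ‖slopeCoeff b z n‖ * R ^ (n + 1) := by
        rw [← tsum_mul_right]
        simp only [mul_assoc, ← pow_succ]
    _ ≤ ∑' n, ∑' k, ‖b (n + k + 1)‖ * R ^ (n + k + 1) * (‖z‖ / R) ^ k :=
        Summable.tsum_le_tsum (norm_slopeCoeff_mul_pow_le hz hb)
          ((summable_mul_right_iff hR.ne').2 (summable_norm_slopeCoeff_mul_pow hz hb) |>.congr
            fun n => by simp only [mul_assoc, ← pow_succ])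
          (summable_slopeCoeff_majorant hz hb).prod
    _ ≤ (∑' N, ‖b (N + 1)‖ * R ^ (N + 1)) * (1 - ‖z‖ / R)⁻¹ :=
        tsum_tsum_shift_mul_geometric_le (fun N => by positivity) hb1 hr0 hr1
    _ = (R - ‖z‖)⁻¹ * (∑' N, ‖b (N + 1)‖ * R ^ (N + 1)) * R := by
        field_simp

variable [CompleteSpace 𝕜]

theorem slopeCoeff_eq_add_mul_slopeCoeff_succ (hz : ‖z‖ < R)
    (hb : Summable fun N => ‖b N‖ * R ^ N) (n : ℕ) :
    slopeCoeff b z n = b (n + 1) + z * slopeCoeff b z (n + 1) := by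
  rw [slopeCoeff, (summable_norm_slopeCoeff_term hz hb n).of_norm.tsum_eq_zero_add, slopeCoeff,
    ← tsum_mul_left]
  congr 1
  · simp
  · refine tsum_congr fun k => ?_
    rw [pow_succ, add_right_comm n 1 k, add_assoc n k 1]
    ring

theorem summable_mul_pow_of_norm_le (hb : Summable fun N => ‖b N‖ * R ^ N) (hw : ‖w‖ ≤ R) :
    Summable fun N => b N * w ^ N :=
  .of_norm_bounded hb fun N => by
    rw [norm_mul, norm_pow]
    gcongr

theorem tsum_slopeCoeff_mul_pow_mul_sub (hz : ‖z‖ < R) (hw : ‖w‖ ≤ R)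
    (hb : Summable fun N => ‖b N‖ * R ^ N) :
    (∑' n, slopeCoeff b z n * w ^ n) * (w - z) = ∑' N, b N * w ^ N - ∑' N, b N * z ^ N := by
  set E := ∑' n, slopeCoeff b z n * w ^ n
  have hE : HasSum (fun n => slopeCoeff b z n * w ^ n) E :=
    (summable_mul_pow_of_norm_le (summable_norm_slopeCoeff_mul_pow hz hb) hw).hasSum
  have hE_succ : HasSum (fun n => slopeCoeff b z (n + 1) * w ^ (n + 1))
      (E - slopeCoeff b z 0) := by
    simpa using (hasSum_nat_add_iff' 1).2 hE
  have hw_succ : HasSum (fun n => b (n + 1) * w ^ (n + 1))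
      (w * E - z * (E - slopeCoeff b z 0)) :=
    ((hE.mul_left w).sub (hE_succ.mul_left z)).congr_fun fun n => by
      rw [slopeCoeff_eq_add_mul_slopeCoeff_succ hz hb n, pow_succ]
      ring
  have hz_succ : HasSum (fun k => b (k + 1) * z ^ (k + 1)) (z * slopeCoeff b z 0) :=
    ((summable_norm_slopeCoeff_term hz hb 0).of_norm.hasSum.mul_left z).congr_fun fun k => by
      rw [zero_add, pow_succ]
      ring
  have hw_sum : HasSum (fun N => b N * w ^ N) (b 0 + (w * E - z * (E - slopeCoeff b z 0))) := by
    simpa using HasSum.zero_add (f := fun N => b N * w ^ N) hw_succ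
  have hz_sum : HasSum (fun N => b N * z ^ N) (b 0 + z * slopeCoeff b z 0) := by
    simpa using HasSum.zero_add (f := fun N => b N * z ^ N) hz_succ
  rw [hw_sum.tsum_eq, hz_sum.tsum_eq]
  ring

end SlopeCoeff

theorem tsum_add_one_add_tsum_neg_add_one_le {f : ℤ → ℝ} (hf₀ : 0 ≤ f) (hf : Summable f) :
    ∑' n : ℕ, f (n + 1) + ∑' n : ℕ, f (-(n + 1)) ≤ ∑' i, f i := by
  have h₁ : Summable fun n : ℕ => f (n + 1) :=
    hf.comp_injective fun a b h => by simpa using h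
  have h₂ : Summable fun n : ℕ => f (-(n + 1)) :=
    hf.comp_injective fun a b h => by simpa using h
  rw [tsum_of_add_one_of_neg_add_one h₁ h₂]
  linarith [show 0 ≤ f 0 from hf₀ 0]

section LaurentSlopeCoeff

variable {𝕜 : Type*} [NormedField 𝕜] {c : ℤ → 𝕜} {μ x : 𝕜} {ρ : ℝ}

noncomputable def laurentSlopeCoeff (c : ℤ → 𝕜) (μ : 𝕜) : ℤ → 𝕜
  | (n : ℕ) => slopeCoeff (fun N => c N) μ n
  | .negSucc m => -μ⁻¹ * slopeCoeff (fun N => c (-N)) μ⁻¹ m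

@[simp]
theorem laurentSlopeCoeff_natCast (n : ℕ) :
    laurentSlopeCoeff c μ n = slopeCoeff (fun N => c N) μ n := rfl

theorem laurentSlopeCoeff_neg_natCast_add_one (m : ℕ) :
    laurentSlopeCoeff c μ (-(m + 1)) = -μ⁻¹ * slopeCoeff (fun N => c (-N)) μ⁻¹ m := by
  rw [← Int.negSucc_eq]
  rfl

theorem norm_laurentSlopeCoeff_neg_mul_pow (m : ℕ) :
    ‖laurentSlopeCoeff c μ (-(m + 1))‖ * ρ ^ (-((m : ℤ) + 1)).natAbs =
      ρ * ‖μ‖⁻¹ * (‖slopeCoeff (fun N => c (-N)) μ⁻¹ m‖ * ρ ^ m) := by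
  rw [laurentSlopeCoeff_neg_natCast_add_one, norm_mul, norm_neg, norm_inv,
    show (-((m : ℤ) + 1)).natAbs = m + 1 by omega, pow_succ]
  ring

theorem summable_norm_natCast_mul_pow (hc : Summable fun i => ‖c i‖ * ρ ^ i.natAbs) :
    Summable fun N : ℕ => ‖c N‖ * ρ ^ N := by
  simpa [Function.comp_def] using hc.comp_injective Nat.cast_injective

theorem summable_norm_neg_natCast_mul_pow (hc : Summable fun i => ‖c i‖ * ρ ^ i.natAbs) :
    Summable fun N : ℕ => ‖c (-N)‖ * ρ ^ N := by
  simpa [Function.comp_def] using hc.comp_injective (neg_injective.comp Nat.cast_injective)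

theorem summable_norm_laurentSlopeCoeff_mul_pow (hμ₁ : ρ⁻¹ < ‖μ‖) (hμ₂ : ‖μ‖ < ρ)
    (hc : Summable fun i => ‖c i‖ * ρ ^ i.natAbs) :
    Summable fun j => ‖laurentSlopeCoeff c μ j‖ * ρ ^ j.natAbs := by
  have hρ : 0 < ρ := (norm_nonneg μ).trans_lt hμ₂
  have hμinv : ‖μ⁻¹‖ < ρ := by rw [norm_inv]; exact inv_lt_of_inv_lt₀ hρ hμ₁
  refine .of_nat_of_neg_add_one ?_ ?_
  · simpa using summable_norm_slopeCoeff_mul_pow hμ₂ (summable_norm_natCast_mul_pow hc)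
  · simp only [norm_laurentSlopeCoeff_neg_mul_pow]
    exact (summable_norm_slopeCoeff_mul_pow hμinv (summable_norm_neg_natCast_mul_pow hc)).mul_left _

theorem tsum_norm_laurentSlopeCoeff_mul_pow_le (hμ₁ : ρ⁻¹ < ‖μ‖) (hμ₂ : ‖μ‖ < ρ)
    (hc : Summable fun i => ‖c i‖ * ρ ^ i.natAbs) :
    ∑' j, ‖laurentSlopeCoeff c μ j‖ * ρ ^ j.natAbs ≤
      max (ρ - ‖μ‖)⁻¹ (‖μ‖ - ρ⁻¹)⁻¹ * ∑' i, ‖c i‖ * ρ ^ i.natAbs := by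
  have hρ : 0 < ρ := (norm_nonneg μ).trans_lt hμ₂
  have hμinv : ‖μ⁻¹‖ < ρ := by rw [norm_inv]; exact inv_lt_of_inv_lt₀ hρ hμ₁
  have hpos := summable_norm_natCast_mul_pow hc
  have hneg := summable_norm_neg_natCast_mul_pow hc
  set P := ∑' N : ℕ, ‖c (N + 1 : ℕ)‖ * ρ ^ (N + 1)
  set Q := ∑' N : ℕ, ‖c (-(N + 1 : ℕ))‖ * ρ ^ (N + 1)
  have hPQ : P + Q ≤ ∑' i, ‖c i‖ * ρ ^ i.natAbs := by
    convert tsum_add_one_add_tsum_neg_add_one_le (fun i => by positivity) hc using 3 <;>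
      simp only [Nat.cast_add, Nat.cast_one] <;> congr 2
  have hneg_const : ρ * ‖μ‖⁻¹ * (ρ - ‖μ⁻¹‖)⁻¹ = (‖μ‖ - ρ⁻¹)⁻¹ := by
    have hμ : 0 < ‖μ‖ := (inv_pos.2 hρ).trans hμ₁
    rw [norm_inv]
    field_simp
  calc ∑' j, ‖laurentSlopeCoeff c μ j‖ * ρ ^ j.natAbs
      = ∑' n, ‖slopeCoeff (fun N => c N) μ n‖ * ρ ^ n +
          ρ * ‖μ‖⁻¹ * ∑' m, ‖slopeCoeff (fun N => c (-N)) μ⁻¹ m‖ * ρ ^ m := by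
        rw [tsum_of_nat_of_neg_add_one, ← tsum_mul_left]
        · simp only [laurentSlopeCoeff_natCast, Int.natAbs_natCast,
            norm_laurentSlopeCoeff_neg_mul_pow]
        · simpa using summable_norm_slopeCoeff_mul_pow hμ₂ hpos
        · simp only [norm_laurentSlopeCoeff_neg_mul_pow]
          exact (summable_norm_slopeCoeff_mul_pow hμinv hneg).mul_left _
    _ ≤ (ρ - ‖μ‖)⁻¹ * P + ρ * ‖μ‖⁻¹ * ((ρ - ‖μ⁻¹‖)⁻¹ * Q) := by
        gcongr
        · exact tsum_norm_slopeCoeff_mul_pow_le hμ₂ hpos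
        · exact tsum_norm_slopeCoeff_mul_pow_le hμinv hneg
    _ = (ρ - ‖μ‖)⁻¹ * P + (‖μ‖ - ρ⁻¹)⁻¹ * Q := by rw [← hneg_const]; ring
    _ ≤ max (ρ - ‖μ‖)⁻¹ (‖μ‖ - ρ⁻¹)⁻¹ * (P + Q) := by
        rw [mul_add]
        gcongr
        · exact le_max_left _ _
        · exact le_max_right _ _
    _ ≤ max (ρ - ‖μ‖)⁻¹ (‖μ‖ - ρ⁻¹)⁻¹ * ∑' i, ‖c i‖ * ρ ^ i.natAbs := by
        gcongr

theorem norm_zpow_le_pow_natAbs (hx : ‖x‖ ≤ ρ) (hx' : ‖x⁻¹‖ ≤ ρ) (i : ℤ) :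
    ‖x ^ i‖ ≤ ρ ^ i.natAbs := by
  cases i with
  | ofNat n => simpa using pow_le_pow_left₀ (norm_nonneg x) hx n
  | negSucc n =>
    rw [zpow_negSucc, ← inv_pow, norm_pow]
    exact pow_le_pow_left₀ (norm_nonneg _) hx' _

variable [CompleteSpace 𝕜]

theorem summable_mul_zpow_of_norm_le (hc : Summable fun i => ‖c i‖ * ρ ^ i.natAbs)
    (hx : ‖x‖ ≤ ρ) (hx' : ‖x⁻¹‖ ≤ ρ) : Summable fun i => c i * x ^ i :=
  .of_norm_bounded hc fun i => by
    rw [norm_mul]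
    gcongr
    exact norm_zpow_le_pow_natAbs hx hx' i

theorem tsum_mul_zpow_eq (hc : Summable fun i => ‖c i‖ * ρ ^ i.natAbs)
    (hx : ‖x‖ ≤ ρ) (hx' : ‖x⁻¹‖ ≤ ρ) :
    ∑' i, c i * x ^ i = ∑' N : ℕ, c N * x ^ N + ∑' N : ℕ, c (-N) * x⁻¹ ^ N - c 0 := by
  have hpos := summable_mul_pow_of_norm_le (summable_norm_natCast_mul_pow hc) hx
  have hneg := summable_mul_pow_of_norm_le (summable_norm_neg_natCast_mul_pow hc) hx'
  have hsum := HasSum.of_nat_of_neg (f := fun i => c i * x ^ i)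
    (by simpa using hpos.hasSum) (by simpa [inv_pow] using hneg.hasSum)
  simpa using hsum.tsum_eq

theorem tsum_laurentSlopeCoeff_mul_zpow_eq (hμ₁ : ρ⁻¹ < ‖μ‖) (hμ₂ : ‖μ‖ < ρ)
    (hc : Summable fun i => ‖c i‖ * ρ ^ i.natAbs) (hx : ‖x‖ ≤ ρ) (hx' : ‖x⁻¹‖ ≤ ρ) :
    ∑' j, laurentSlopeCoeff c μ j * x ^ j =
      ∑' n, slopeCoeff (fun N => c N) μ n * x ^ n -
        (μ * x)⁻¹ * ∑' m, slopeCoeff (fun N => c (-N)) μ⁻¹ m * x⁻¹ ^ m := by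
  have hd := summable_mul_zpow_of_norm_le
    (summable_norm_laurentSlopeCoeff_mul_pow hμ₁ hμ₂ hc) hx hx'
  have hd_pos : Summable fun n : ℕ => laurentSlopeCoeff c μ n * x ^ (n : ℤ) :=
    hd.comp_injective Nat.cast_injective
  have hd_neg : Summable fun m : ℕ => laurentSlopeCoeff c μ (-(m + 1)) * x ^ (-((m : ℤ) + 1)) :=
    hd.comp_injective (i := fun m : ℕ => -((m : ℤ) + 1)) fun a b h => by simpa using h
  rw [tsum_of_nat_of_neg_add_one (f := fun j => laurentSlopeCoeff c μ j * x ^ j) hd_pos hd_neg,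
    sub_eq_add_neg, ← neg_mul, ← tsum_mul_left]
  congr 1
  · simp
  · refine tsum_congr fun m => ?_
    rw [laurentSlopeCoeff_neg_natCast_add_one, zpow_neg, ← Nat.cast_succ, zpow_natCast, mul_inv,
      inv_pow, pow_succ]
    ring

theorem tsum_laurentSlopeCoeff_mul_zpow_mul_sub (hμ₁ : ρ⁻¹ < ‖μ‖) (hμ₂ : ‖μ‖ < ρ)
    (hc : Summable fun i => ‖c i‖ * ρ ^ i.natAbs) (hx₁ : ρ⁻¹ ≤ ‖x‖) (hx₂ : ‖x‖ ≤ ρ) :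
    (∑' j, laurentSlopeCoeff c μ j * x ^ j) * (x - μ) =
      ∑' i, c i * x ^ i - ∑' i, c i * μ ^ i := by
  have hρ : 0 < ρ := (norm_nonneg μ).trans_lt hμ₂
  have hμ : μ ≠ 0 := norm_pos_iff.1 ((inv_pos.2 hρ).trans hμ₁)
  have hx : x ≠ 0 := norm_pos_iff.1 ((inv_pos.2 hρ).trans_le hx₁)
  have hμinv : ‖μ⁻¹‖ < ρ := by rw [norm_inv]; exact inv_lt_of_inv_lt₀ hρ hμ₁
  have hxinv : ‖x⁻¹‖ ≤ ρ := by rw [norm_inv]; exact inv_le_of_inv_le₀ hρ hx₁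
  have hpos := tsum_slopeCoeff_mul_pow_mul_sub hμ₂ hx₂ (summable_norm_natCast_mul_pow hc)
  have hneg := tsum_slopeCoeff_mul_pow_mul_sub hμinv hxinv (summable_norm_neg_natCast_mul_pow hc)
  have hfactor : -(μ * x)⁻¹ * (x - μ) = x⁻¹ - μ⁻¹ := by field_simp; ring
  rw [tsum_laurentSlopeCoeff_mul_zpow_eq hμ₁ hμ₂ hc hx₂ hxinv, tsum_mul_zpow_eq hc hx₂ hxinv,
    tsum_mul_zpow_eq hc hμ₂.le hμinv.le]
  linear_combination hpos + hneg +
    (∑' m, slopeCoeff (fun N => c (-N)) μ⁻¹ m * x⁻¹ ^ m) * hfactor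

end LaurentSlopeCoeff

theorem Lmu_bounded_on_W_general
    (ρ : ℝ) (μ : ℂ) (hμ1 : ρ⁻¹ < ‖μ‖) (hμ2 : ‖μ‖ < ρ) (c : ℤ → ℂ)
    (hc : Summable fun i => ‖c i‖ * ρ ^ i.natAbs) :
    ∃ d : ℤ → ℂ,
      (Summable fun j => ‖d j‖ * ρ ^ j.natAbs) ∧
      (∑' j : ℤ, ‖d j‖ * ρ ^ j.natAbs) ≤
        max (ρ - ‖μ‖)⁻¹ (‖μ‖ - ρ⁻¹)⁻¹ * ∑' i : ℤ, ‖c i‖ * ρ ^ i.natAbs ∧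
      ∀ l : ℂ, ρ⁻¹ < ‖l‖ → ‖l‖ < ρ →
        (∑' j : ℤ, d j * l ^ j) * (l - μ) =
          (∑' i : ℤ, c i * l ^ i) - (∑' i : ℤ, c i * μ ^ i) :=
  ⟨laurentSlopeCoeff c μ, summable_norm_laurentSlopeCoeff_mul_pow hμ1 hμ2 hc,
    tsum_norm_laurentSlopeCoeff_mul_pow_le hμ1 hμ2 hc, fun _ hl1 hl2 =>
      tsum_laurentSlopeCoeff_mul_zpow_mul_sub hμ1 hμ2 hc hl1.le hl2.le⟩

/-- For `μ` in the annulus `ρ⁻¹ < |μ| < ρ`, the operator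
`L_μ(f)(λ) = (f(λ) - f(μ))/(λ - μ)` is bounded on the weighted Wiener algebra `W`
with norm at most `max (1/(ρ - |μ|)) (1/(|μ| - ρ⁻¹))`. -/
theorem Lmu_bounded_on_W
    (ρ : ℝ) (hρ : 1 < ρ) (μ : ℂ) (hμ1 : ρ⁻¹ < ‖μ‖) (hμ2 : ‖μ‖ < ρ) (c : ℤ → ℂ)
    (hc : Summable fun i => ‖c i‖ * ρ ^ i.natAbs) :
    ∃ d : ℤ → ℂ,
      (Summable fun j => ‖d j‖ * ρ ^ j.natAbs) ∧
      (∑' j : ℤ, ‖d j‖ * ρ ^ j.natAbs) ≤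
        max (ρ - ‖μ‖)⁻¹ (‖μ‖ - ρ⁻¹)⁻¹ * ∑' i : ℤ, ‖c i‖ * ρ ^ i.natAbs ∧
      ∀ l : ℂ, ρ⁻¹ < ‖l‖ → ‖l‖ < ρ →
        (∑' j : ℤ, d j * l ^ j) * (l - μ) =
          (∑' i : ℤ, c i * l ^ i) - (∑' i : ℤ, c i * μ ^ i) :=
  Lmu_bounded_on_W_general ρ μ hμ1 hμ2 c hc
end

section
/- Let ξ^C = [[0,0],[1,0]] dz be the catenoid potential and for μ ∈ ℂ let G(z,λ) = [[(1−λ)/(2(z−μ)), −1],[λ, 2(z−μ)]]. Then the gauged potential ξ^C · G := G^{-1} ξ^C G + G^{-1} dG equals [[(λ−1)/(2(z−μ)), 1],[(1−λ²)/(4(z−μ)²), (1−λ)/(2(z−μ))]] dz. In particular, at λ = 1 the gauged potential equals [[0,1],[0,0]] dz. -/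
/-!
Since `det G = 1`, the inverse `G⁻¹` is the adjugate of `G`, and only the diagonal entries of
`G` depend on `z`, so `dG` is diagonal; the gauged potential is then a product of explicit
`2 × 2` matrices.
-/

open Matrix

/-- The gauge `G(z,λ)` used to gauge the catenoid potential. -/
noncomputable def gaugeG (μ z l : ℂ) : Matrix (Fin 2) (Fin 2) ℂ :=
  !![(1 - l) / (2 * (z - μ)), -1; l, 2 * (z - μ)]

theorem hasDerivAt_two_mul_sub (μ z : ℂ) : HasDerivAt (fun w => 2 * (w - μ)) 2 z := by
  simpa using ((hasDerivAt_id z).sub_const μ).const_mul 2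

theorem hasDerivAt_div_two_mul_sub {μ z : ℂ} (c : ℂ) (hz : z ≠ μ) :
    HasDerivAt (fun w => c / (2 * (w - μ))) (-c / (2 * (z - μ) ^ 2)) z := by
  have hzμ : z - μ ≠ 0 := sub_ne_zero.mpr hz
  refine ((hasDerivAt_const z c).div (hasDerivAt_two_mul_sub μ z)
    (mul_ne_zero two_ne_zero hzμ)).congr_deriv ?_
  field_simp
  ring

section

variable {μ z : ℂ} (l : ℂ)

theorem det_gaugeG (hz : z ≠ μ) : (gaugeG μ z l).det = 1 := by
  have hzμ : z - μ ≠ 0 := sub_ne_zero.mpr hz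
  rw [gaugeG, det_fin_two_of]
  field_simp
  ring

theorem inv_gaugeG (hz : z ≠ μ) :
    (gaugeG μ z l)⁻¹ = !![2 * (z - μ), 1; -l, (1 - l) / (2 * (z - μ))] := by
  rw [inv_def, det_gaugeG l hz, Ring.inverse_one, one_smul, gaugeG, adjugate_fin_two_of, neg_neg]

theorem deriv_gaugeG (hz : z ≠ μ) :
    Matrix.of (fun i j => deriv (fun w => gaugeG μ w l i j) z)
      = !![-(1 - l) / (2 * (z - μ) ^ 2), 0; 0, 2] := by
  ext i j
  fin_cases i <;> fin_cases j
  · simpa [gaugeG] using (hasDerivAt_div_two_mul_sub (1 - l) hz).deriv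
  all_goals simp [gaugeG]

end

/-- Gauging the catenoid potential `ξ^C = [[0,0],[1,0]] dz` by `G` yields
`[[(λ−1)/(2(z−μ)), 1],[(1−λ²)/(4(z−μ)²), (1−λ)/(2(z−μ))]] dz`; at `λ = 1` the gauged
potential is `[[0,1],[0,0]] dz`. -/
theorem gauged_catenoid_potential (μ z l : ℂ) (hz : z ≠ μ) :
    (gaugeG μ z l)⁻¹ * !![0, 0; 1, 0] * gaugeG μ z l
      + (gaugeG μ z l)⁻¹ * Matrix.of (fun i j => deriv (fun w => gaugeG μ w l i j) z)
    = !![(l - 1) / (2 * (z - μ)), 1;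
         (1 - l ^ 2) / (4 * (z - μ) ^ 2), (1 - l) / (2 * (z - μ))] ∧
    (l = 1 →
      (gaugeG μ z l)⁻¹ * !![0, 0; 1, 0] * gaugeG μ z l
        + (gaugeG μ z l)⁻¹ * Matrix.of (fun i j => deriv (fun w => gaugeG μ w l i j) z)
      = !![0, 1; 0, 0]) := by
  have hzμ : z - μ ≠ 0 := sub_ne_zero.mpr hz
  have gauged : (gaugeG μ z l)⁻¹ * !![0, 0; 1, 0] * gaugeG μ z l
      + (gaugeG μ z l)⁻¹ * Matrix.of (fun i j => deriv (fun w => gaugeG μ w l i j) z)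
    = !![(l - 1) / (2 * (z - μ)), 1;
         (1 - l ^ 2) / (4 * (z - μ) ^ 2), (1 - l) / (2 * (z - μ))] := by
    rw [deriv_gaugeG l hz, inv_gaugeG l hz, gaugeG]
    simp only [mul_fin_two, of_add_of, add_cons, empty_add_empty, head_cons, tail_cons,
      EmbeddingLike.apply_eq_iff_eq, vecCons_inj, and_true]
    refine ⟨⟨?_, ?_⟩, ?_, ?_⟩ <;> field_simp <;> ring
  refine ⟨gauged, fun hl => ?_⟩
  rw [gauged, hl]
  norm_num
end

section
/- Let g(t,s,z) be a C^∞ function of (t,s) in a neighborhood of (0,0) ∈ ℝ² and z in an open subset Ω of a finite-dimensional normed space, with values in a Banach space, such that g(0,s,z) is independent of s. Define f(t,z) = g(t, t·log|t|, z) for t ≠ 0 and f(0,z) = g(0,0,z). Then f is of class C¹ on a neighborhood of {0} × Ω, with df(0,z₀) = (∂g/∂t)(0,0,z₀) dt + d_z g(0,0,z₀). -/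
/-!
Write `f = G ∘ Φ` with `Φ (t, z) = ((t, t log t), z)` (on `ℝ`, `log |t| = log t`). Off `t = 0`
the chain rule gives `df = dG ∘ (L₀ + (log t + 1) • L₁)` with `L₁ (t, v) = ((0, t), 0)`.
Since `G ((0, s), z)` does not depend on `s`, `dG ∘ L₁` vanishes on `{t = 0}`; being `C¹`, it is
`O(t)` there, so the singular term is `O(t log t)` and tends to `0`. Hence `df` extends
continuously across `{t = 0}` with value `dG ∘ L₀`, and a continuous function whose derivative
off a hyperplane extends continuously is differentiable across it, with that derivative (mean
value inequality on either side).
-/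

open Set Filter Topology Asymptotics ContinuousLinearMap

section

variable {E B : Type*} [NormedAddCommGroup E] [NormedSpace ℝ E]
  [NormedAddCommGroup B] [NormedSpace ℝ B]

theorem hasFDerivAt_of_hasFDerivAt_of_fst_ne_zero {f : ℝ × E → B}
    {f' : ℝ × E → ℝ × E →L[ℝ] B} {U : Set (ℝ × E)} (hU : IsOpen U)
    (hf : ContinuousOn f U) (hf' : ContinuousOn f' U)
    (hderiv : ∀ p ∈ U, p.1 ≠ 0 → HasFDerivAt f (f' p) p) {p : ℝ × E} (hp : p ∈ U) :
    HasFDerivAt f (f' p) p := by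
  obtain ⟨r, hr, hrU⟩ := Metric.nhds_basis_closedBall.mem_iff.1 (hU.mem_nhds hp)
  have half (S : Set ℝ) (hS : IsOpen S) (hSc : Convex ℝ S) (hS0 : 0 ∉ S) :
      HasFDerivWithinAt f (f' p) (Metric.ball p r ∩ closure S ×ˢ univ) p := by
    set s := Metric.ball p r ∩ S ×ˢ univ
    have hsU : closure s ⊆ U := (closure_mono inter_subset_left).trans
      (Metric.closure_ball_subset_closedBall.trans hrU)
    have hs_deriv : ∀ q ∈ s, HasFDerivAt f (f' q) q := fun q hq =>
      hderiv q (hsU (subset_closure hq)) fun h => hS0 (h ▸ hq.2.1)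
    have hlim : Tendsto (fderiv ℝ f) (𝓝[s] p) (𝓝 (f' p)) :=
      (((hf' p hp).continuousAt (hU.mem_nhds hp)).tendsto.mono_left nhdsWithin_le_nhds).congr'
        (eventually_nhdsWithin_of_forall fun q hq => (hs_deriv q hq).fderiv.symm)
    refine (hasFDerivWithinAt_closure_of_tendsto_fderiv
      (fun q hq => (hs_deriv q hq).differentiableAt.differentiableWithinAt)
      ((convex_ball p r).inter (hSc.prod convex_univ))
      (Metric.isOpen_ball.inter (hS.prod isOpen_univ))
      (fun q hq => (hf q (hsU hq)).mono (subset_closure.trans hsU)) hlim).mono ?_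
    rw [← closure_univ, ← closure_prod_eq]
    exact Metric.isOpen_ball.inter_closure
  have hball : Metric.ball p r ⊆
      (Metric.ball p r ∩ Ici 0 ×ˢ univ) ∪ (Metric.ball p r ∩ Iic 0 ×ˢ univ) := fun q hq =>
    (le_total 0 q.1).imp (fun h => ⟨hq, h, trivial⟩) fun h => ⟨hq, h, trivial⟩
  have hhalves := (half (Ioi 0) isOpen_Ioi (convex_Ioi 0) self_notMem_Ioi).union
    (half (Iio 0) isOpen_Iio (convex_Iio 0) self_notMem_Iio)
  rw [closure_Ioi, closure_Iio] at hhalves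
  exact hhalves.hasFDerivAt (mem_of_superset (Metric.ball_mem_nhds p hr) hball)

theorem HasFDerivAt.eq_smulRight_deriv_add_fderiv_comp_snd {h : ℝ × E → B}
    {L : ℝ × E →L[ℝ] B} {p : ℝ × E} (hh : HasFDerivAt h L p) :
    L = (fst ℝ ℝ E).smulRight (deriv (fun t => h (t, p.2)) p.1)
      + (fderiv ℝ (fun z => h (p.1, z)) p.2).comp (snd ℝ ℝ E) := by
  have ht : deriv (fun t => h (t, p.2)) p.1 = L (1, 0) :=
    (hh.comp_hasDerivAt p.1 ((hasDerivAt_id p.1).prodMk (hasDerivAt_const p.1 p.2))).deriv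
  have hz : fderiv ℝ (fun z => h (p.1, z)) p.2 = L.comp (inr ℝ ℝ E) :=
    (hh.comp (x := p.2) (hasFDerivAt_prodMk_right (𝕜 := ℝ) p.1 p.2)).fderiv
  refine ContinuousLinearMap.ext fun ⟨a, v⟩ => ?_
  simp [ht, hz, ← map_smul, ← map_add]

theorem HasStrictFDerivAt.isBigO_comp_of_eventually_eq_zero {𝕜 X Y α : Type*}
    [NontriviallyNormedField 𝕜] [NormedAddCommGroup X] [NormedSpace 𝕜 X]
    [NormedAddCommGroup Y] [NormedSpace 𝕜 Y] {K : X → Y} {K' : X →L[𝕜] Y} {x : X}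
    (hK : HasStrictFDerivAt K K' x) {l : Filter α} {u v : α → X}
    (hu : Tendsto u l (𝓝 x)) (hv : Tendsto v l (𝓝 x)) (hKv : ∀ᶠ a in l, K (v a) = 0) :
    (fun a => K (u a)) =O[l] fun a => u a - v a :=
  (hK.isBigO_sub.comp_tendsto (hu.prodMk_nhds hv)).congr'
    (hKv.mono fun a ha => by simp [ha]) EventuallyEq.rfl

theorem tendsto_log_add_one_smul_of_isBigO {α : Type*} {l : Filter α} {τ : α → ℝ}
    {u : α → B} (hτ : Tendsto τ l (𝓝 0)) (hu : u =O[l] τ) :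
    Tendsto (fun a => (Real.log (τ a) + 1) • u a) l (𝓝 0) := by
  have hcont : Continuous fun t : ℝ => (Real.log t + 1) * t :=
    (Real.continuous_mul_log.add continuous_id).congr fun t => by
      simp only [Pi.add_apply, id]; ring
  have hlim : Tendsto (fun a => (Real.log (τ a) + 1) • τ a) l (𝓝 0) := by
    simpa [Function.comp_def] using (hcont.tendsto 0).comp hτ
  exact ((isBigO_refl (fun a => Real.log (τ a) + 1) l).smul hu).trans_tendsto hlim

end

noncomputable def mulLogGraph {E : Type*} (p : ℝ × E) : (ℝ × ℝ) × E :=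
  ((p.1, p.1 * Real.log p.1), p.2)

theorem continuous_mulLogGraph {E : Type*} [TopologicalSpace E] :
    Continuous (mulLogGraph (E := E)) :=
  (continuous_fst.prodMk (Real.continuous_mul_log.comp continuous_fst)).prodMk continuous_snd

section

variable {E B : Type*} [NormedAddCommGroup E] [NormedSpace ℝ E]
  [NormedAddCommGroup B] [NormedSpace ℝ B]

variable (E) in
def sAxisMap : ℝ × E →L[ℝ] (ℝ × ℝ) × E := (inl ℝ (ℝ × ℝ) E ∘L inr ℝ ℝ ℝ) ∘L fst ℝ ℝ E

variable (E) in
/-- At `t = 0` the second summand is junk (`Real.log 0 = 0`); it is harmless because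
`fderiv G` kills `sAxisMap E` on `{t = 0}`. -/
noncomputable def mulLogGraphDeriv (t : ℝ) : ℝ × E →L[ℝ] (ℝ × ℝ) × E :=
  (inl ℝ ℝ ℝ).prodMap (ContinuousLinearMap.id ℝ E) + (Real.log t + 1) • sAxisMap E

theorem hasFDerivAt_mulLogGraph {p : ℝ × E} (hp : p.1 ≠ 0) :
    HasFDerivAt mulLogGraph (mulLogGraphDeriv E p.1) p := by
  have h := ((hasFDerivAt_fst (𝕜 := ℝ)).prodMk
    ((Real.hasDerivAt_mul_log hp).comp_hasFDerivAt p hasFDerivAt_fst)).prodMk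
    (hasFDerivAt_snd (𝕜 := ℝ) (p := p))
  refine h.congr_fderiv ?_
  ext <;> simp [mulLogGraphDeriv, sAxisMap]

variable {W : Set ((ℝ × ℝ) × E)} {G : (ℝ × ℝ) × E → B}

theorem fderiv_comp_sAxisMap_eq_zero (hW : IsOpen W) (hG : DifferentiableOn ℝ G W)
    (hG0 : ∀ s z, ((0, s), z) ∈ W → G ((0, s), z) = G ((0, 0), z)) {s : ℝ} {z : E}
    (hq : ((0, s), z) ∈ W) :
    (fderiv ℝ G ((0, s), z)).comp (sAxisMap E) = 0 := by
  have hcurve :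
      HasFDerivAt (fun s' : ℝ => (((0 : ℝ), s'), z)) (inl ℝ (ℝ × ℝ) E ∘L inr ℝ ℝ ℝ) s :=
    ((hasFDerivAt_prodMk_right (0 : ℝ) s).prodMk (hasFDerivAt_const z s)).congr_fderiv
      (by ext <;> simp)
  have hconst : (fun s' => G ((0, s'), z)) =ᶠ[𝓝 s] fun _ => G ((0, 0), z) := by
    filter_upwards [hcurve.continuousAt.preimage_mem_nhds (hW.mem_nhds hq)] with s' hs'
      using hG0 s' z hs'
  have hs : (fderiv ℝ G ((0, s), z)).comp (inl ℝ (ℝ × ℝ) E ∘L inr ℝ ℝ ℝ) = 0 :=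
    ((hG.differentiableAt (hW.mem_nhds hq)).hasFDerivAt.comp s hcurve).unique
      ((hasFDerivAt_const _ s).congr_of_eventuallyEq hconst)
  rw [sAxisMap, ← comp_assoc, hs, zero_comp]

theorem tendsto_log_add_one_smul_fderiv_comp_sAxisMap (hW : IsOpen W) (hG : ContDiffOn ℝ 2 G W)
    (hG0 : ∀ s z, ((0, s), z) ∈ W → G ((0, s), z) = G ((0, 0), z))
    {z : E} (hz : ((0, 0), z) ∈ W) :
    Tendsto (fun p : ℝ × E => (Real.log p.1 + 1) • (fderiv ℝ G (mulLogGraph p)).comp (sAxisMap E))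
      (𝓝 (0, z)) (𝓝 0) := by
  set K : (ℝ × ℝ) × E → (ℝ × E →L[ℝ] B) := fun q => (fderiv ℝ G q).comp (sAxisMap E)
  have hK : HasStrictFDerivAt K (fderiv ℝ K ((0, 0), z)) ((0, 0), z) :=
    (((hG.fderiv_of_isOpen hW (by norm_num)).clm_comp contDiffOn_const).contDiffAt
      (hW.mem_nhds hz)).hasStrictFDerivAt one_ne_zero
  -- `v p` is the point of `{t = 0}` closest to `mulLogGraph p`, where `K` vanishes.
  set v : ℝ × E → (ℝ × ℝ) × E := fun p => ((0, p.1 * Real.log p.1), p.2)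
  have hu : Tendsto mulLogGraph (𝓝 (0, z)) (𝓝 ((0, 0), z)) := by
    simpa [mulLogGraph] using continuous_mulLogGraph.tendsto ((0 : ℝ), z)
  have hv : Tendsto v (𝓝 (0, z)) (𝓝 ((0, 0), z)) := by
    have : Continuous v := (continuous_const.prodMk
      (Real.continuous_mul_log.comp continuous_fst)).prodMk continuous_snd
    simpa [v] using this.tendsto ((0 : ℝ), z)
  have hKv : ∀ᶠ p in 𝓝 (0, z), K (v p) = 0 := by
    filter_upwards [hv.eventually (hW.mem_nhds hz)] with p hp
    exact fderiv_comp_sAxisMap_eq_zero hW (hG.differentiableOn (by norm_num)) hG0 hp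
  have hO := hK.isBigO_comp_of_eventually_eq_zero hu hv hKv
  have h2 : (fun p => mulLogGraph p - v p) =O[𝓝 (0, z)] fun p : ℝ × E => p.1 := by
    refine isBigO_of_le _ fun p => ?_
    simp [mulLogGraph, v]
  exact tendsto_log_add_one_smul_of_isBigO (τ := fun p : ℝ × E => p.1)
    (u := fun p => K (mulLogGraph p)) (continuous_fst.tendsto' ((0 : ℝ), z) 0 rfl) (hO.trans h2)

theorem continuousOn_fderiv_comp_mulLogGraphDeriv (hW : IsOpen W) (hG : ContDiffOn ℝ 2 G W)
    (hG0 : ∀ s z, ((0, s), z) ∈ W → G ((0, s), z) = G ((0, 0), z)) :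
    ContinuousOn (fun p => (fderiv ℝ G (mulLogGraph p)).comp (mulLogGraphDeriv E p.1))
      (mulLogGraph ⁻¹' W) := by
  intro p hp
  have hDG : ContinuousAt (fun p => fderiv ℝ G (mulLogGraph p)) p :=
    ((hG.continuousOn_fderiv_of_isOpen hW (by norm_num)).continuousAt (hW.mem_nhds hp)).comp
      continuous_mulLogGraph.continuousAt
  simp only [mulLogGraphDeriv, comp_add, comp_smul]
  refine ((hDG.clm_comp continuousAt_const).add ?_).continuousWithinAt
  obtain ⟨t, z⟩ := p
  rcases eq_or_ne t 0 with rfl | ht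
  · have hz : ((0, 0), z) ∈ W := by simpa [mulLogGraph] using hp
    have h0 : (Real.log 0 + 1) • (fderiv ℝ G (mulLogGraph (0, z))).comp (sAxisMap E) = 0 := by
      simp [mulLogGraph,
        fderiv_comp_sAxisMap_eq_zero hW (hG.differentiableOn (by norm_num)) hG0 hz]
    rw [ContinuousAt, h0]
    exact tendsto_log_add_one_smul_fderiv_comp_sAxisMap hW hG hG0 hz
  · exact (((Real.continuousAt_log ht).comp (continuousAt_fst (p := (t, z)))).add
      continuousAt_const).smul (hDG.clm_comp (continuousAt_const (y := sAxisMap E)))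

theorem hasFDerivAt_comp_mulLogGraph (hW : IsOpen W) (hG : ContDiffOn ℝ 2 G W)
    (hG0 : ∀ s z, ((0, s), z) ∈ W → G ((0, s), z) = G ((0, 0), z))
    {p : ℝ × E} (hp : mulLogGraph p ∈ W) :
    HasFDerivAt (G ∘ mulLogGraph)
      ((fderiv ℝ G (mulLogGraph p)).comp (mulLogGraphDeriv E p.1)) p :=
  hasFDerivAt_of_hasFDerivAt_of_fst_ne_zero (hW.preimage continuous_mulLogGraph)
    (hG.continuousOn.comp continuous_mulLogGraph.continuousOn (mapsTo_preimage _ _))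
    (continuousOn_fderiv_comp_mulLogGraphDeriv hW hG hG0)
    (fun q hq hq0 => ((hG.differentiableOn (by norm_num)).differentiableAt
      (hW.mem_nhds hq)).hasFDerivAt.comp q (hasFDerivAt_mulLogGraph hq0)) hp

theorem contDiffOn_comp_mulLogGraph (hW : IsOpen W) (hG : ContDiffOn ℝ 2 G W)
    (hG0 : ∀ s z, ((0, s), z) ∈ W → G ((0, s), z) = G ((0, 0), z)) :
    ContDiffOn ℝ 1 (G ∘ mulLogGraph) (mulLogGraph ⁻¹' W) :=
  fun _ hp => (contDiffAt_one_iff.2 ⟨_, _, (hW.preimage continuous_mulLogGraph).mem_nhds hp,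
    continuousOn_fderiv_comp_mulLogGraphDeriv hW hG hG0,
    fun _ hq => hasFDerivAt_comp_mulLogGraph hW hG hG0 hq⟩).contDiffWithinAt

theorem hasFDerivAt_comp_mulLogGraph_zero (hW : IsOpen W) (hG : ContDiffOn ℝ 2 G W)
    (hG0 : ∀ s z, ((0, s), z) ∈ W → G ((0, s), z) = G ((0, 0), z))
    {z : E} (hz : ((0, 0), z) ∈ W) :
    HasFDerivAt (G ∘ mulLogGraph)
      ((fderiv ℝ G ((0, 0), z)).comp ((inl ℝ ℝ ℝ).prodMap (ContinuousLinearMap.id ℝ E)))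
      (0, z) := by
  have h := hasFDerivAt_comp_mulLogGraph hW hG hG0 (p := (0, z))
    (by simpa [mulLogGraph] using hz)
  simpa [mulLogGraph, mulLogGraphDeriv, comp_add,
    fderiv_comp_sAxisMap_eq_zero hW (hG.differentiableOn (by norm_num)) hG0 hz] using h

end

theorem C1_of_tlogt_general
    {E B : Type*}
    [NormedAddCommGroup E] [NormedSpace ℝ E]
    [NormedAddCommGroup B] [NormedSpace ℝ B]
    (Ω : Set E) (hΩ : IsOpen Ω)
    (V : Set (ℝ × ℝ)) (hV : V ∈ nhds ((0, 0) : ℝ × ℝ))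
    (g : ℝ → ℝ → E → B)
    (hg : ContDiffOn ℝ (⊤ : ℕ∞) (fun p : (ℝ × ℝ) × E => g p.1.1 p.1.2 p.2) (V ×ˢ Ω))
    (hind : ∀ s z, ((0 : ℝ), s) ∈ V → z ∈ Ω → g 0 s z = g 0 0 z)
    (f : ℝ → E → B)
    (hf : ∀ t z, f t z = if t = 0 then g 0 0 z else g t (t * Real.log |t|) z) :
    ∃ U : Set (ℝ × E), IsOpen U ∧ (∀ z ∈ Ω, ((0 : ℝ), z) ∈ U) ∧
      ContDiffOn ℝ 1 (fun p : ℝ × E => f p.1 p.2) U ∧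
      ∀ z₀ ∈ Ω, HasFDerivAt (fun p : ℝ × E => f p.1 p.2)
        ((ContinuousLinearMap.fst ℝ ℝ E).smulRight (deriv (fun t => g t 0 z₀) 0)
          + (fderiv ℝ (fun z => g 0 0 z) z₀).comp (ContinuousLinearMap.snd ℝ ℝ E))
        ((0 : ℝ), z₀) := by
  set W := interior V ×ˢ Ω
  set G : (ℝ × ℝ) × E → B := fun q => g q.1.1 q.1.2 q.2
  have hW : IsOpen W := isOpen_interior.prod hΩ
  have hGW : ContDiffOn ℝ 2 G W :=
    (hg.of_le (WithTop.coe_le_coe.2 le_top)).mono (prod_mono interior_subset subset_rfl)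
  have hG0 : ∀ s z, ((0, s), z) ∈ W → G ((0, s), z) = G ((0, 0), z) :=
    fun s z h => hind s z (interior_subset h.1) h.2
  have hfG : (fun p : ℝ × E => f p.1 p.2) = G ∘ mulLogGraph := by
    funext ⟨t, z⟩
    by_cases ht : t = 0 <;> simp [hf, ht, G, mulLogGraph, Real.log_abs]
  have hΩW : ∀ z ∈ Ω, ((0, 0), z) ∈ W := fun z hz => ⟨mem_interior_iff_mem_nhds.2 hV, hz⟩
  refine ⟨mulLogGraph ⁻¹' W, hW.preimage continuous_mulLogGraph,
    fun z hz => by simpa [mulLogGraph] using hΩW z hz,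
    hfG ▸ contDiffOn_comp_mulLogGraph hW hGW hG0, fun z₀ hz₀ => ?_⟩
  have hpartial : HasFDerivAt (fun p : ℝ × E => g p.1 0 p.2)
      ((fderiv ℝ G ((0, 0), z₀)).comp ((inl ℝ ℝ ℝ).prodMap (ContinuousLinearMap.id ℝ E)))
      (0, z₀) :=
    ((hGW.differentiableOn (by norm_num)).differentiableAt
      (hW.mem_nhds (hΩW z₀ hz₀))).hasFDerivAt.comp (g := G) (0, z₀)
      ((inl ℝ ℝ ℝ).prodMap (ContinuousLinearMap.id ℝ E)).hasFDerivAt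
  rw [hfG, ← hpartial.eq_smulRight_deriv_add_fderiv_comp_snd]
  exact hasFDerivAt_comp_mulLogGraph_zero hW hGW hG0 (hΩW z₀ hz₀)

/-- If `g(t,s,z)` is smooth near `(0,0) × Ω` with `g(0,s,z)` independent of `s`, then
`f(t,z) = g(t, t log|t|, z)` (extended by `g(0,0,z)` at `t = 0`) is `C¹` near `{0} × Ω`,
with `df(0,z₀) = ∂g/∂t(0,0,z₀) dt + d_z g(0,0,z₀)`. -/
theorem C1_of_tlogt
    {E B : Type*}
    [NormedAddCommGroup E] [NormedSpace ℝ E] [FiniteDimensional ℝ E]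
    [NormedAddCommGroup B] [NormedSpace ℝ B] [CompleteSpace B]
    (Ω : Set E) (hΩ : IsOpen Ω)
    (V : Set (ℝ × ℝ)) (hV : V ∈ nhds ((0, 0) : ℝ × ℝ))
    (g : ℝ → ℝ → E → B)
    (hg : ContDiffOn ℝ (⊤ : ℕ∞) (fun p : (ℝ × ℝ) × E => g p.1.1 p.1.2 p.2) (V ×ˢ Ω))
    (hind : ∀ s z, ((0 : ℝ), s) ∈ V → z ∈ Ω → g 0 s z = g 0 0 z)
    (f : ℝ → E → B)
    (hf : ∀ t z, f t z = if t = 0 then g 0 0 z else g t (t * Real.log |t|) z) :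
    ∃ U : Set (ℝ × E), IsOpen U ∧ (∀ z ∈ Ω, ((0 : ℝ), z) ∈ U) ∧
      ContDiffOn ℝ 1 (fun p : ℝ × E => f p.1 p.2) U ∧
      ∀ z₀ ∈ Ω, HasFDerivAt (fun p : ℝ × E => f p.1 p.2)
        ((ContinuousLinearMap.fst ℝ ℝ E).smulRight (deriv (fun t => g t 0 z₀) 0)
          + (fderiv ℝ (fun z => g 0 0 z) z₀).comp (ContinuousLinearMap.snd ℝ ℝ E))
        ((0 : ℝ), z₀) :=
  C1_of_tlogt_general Ω hΩ V hV g hg hind f hf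
end
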